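/- arXiv:2001.06029 — 3 statements merged into one kernel-verified Lean document; each statement's English description precedes it below -/
import Mathlib

section
/- Concatenation of irreducible error events yields tail-biting paths: given a finite nonempty sequence of elements of IEE(σᵢ) whose lengths sum to N, their concatenation (joining successive paths at their common endpoint σᵢ) is a tail-biting path of length N that starts and ends at σᵢ and belongs to TBP(σᵢ). -/
/-- A finite path through the trellis: a length `len`, a state sequence
`st 0, …, st len`, and an output sequence `out 0, …, out (len - 1)`. -/
structure NPath (S A : Type*) where
  len : ℕ
  st : ℕ → S
  out : ℕ → A

/-- Concatenation of a path ending at some state with a path starting at that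
state: state sequences are joined (dropping the repeated initial state of the
second path) and output sequences are appended. -/
def pconcat {S A : Type*} (p q : NPath S A) : NPath S A where
  len := p.len + q.len
  st := fun i => if i < p.len then p.st i else q.st (i - p.len)
  out := fun i => if i < p.len then p.out i else q.out (i - p.len)

/-- Concatenation of the nonempty sequence of paths `p :: l`. -/
def concatAll {S A : Type*} (p : NPath S A) (l : List (NPath S A)) : NPath S A :=
  l.foldl pconcat p

/-- `(s, a)` satisfies the trellis transition constraint for `L` steps. -/
def IsTrellisPath {S A : Type*} (E : Set (S × A × S)) (L : ℕ)
    (s : ℕ → S) (a : ℕ → A) : Prop :=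
  ∀ i < L, (s i, a i, s (i + 1)) ∈ E

/-- `(s, a)` is a tail-biting path of length `N`. -/
def IsTBPath {S A : Type*} (E : Set (S × A × S)) (N : ℕ)
    (s : ℕ → S) (a : ℕ → A) : Prop :=
  IsTrellisPath E N s a ∧ s 0 = s N

/-- `(s, a)` belongs to `TBP(σᵢ)`: it is a tail-biting path of length `N` that
traverses `σᵢ` and avoids `σ_0, …, σ_{i-1}`. -/
def InTBP {S A : Type*} {M : ℕ} (E : Set (S × A × S)) (σ : Fin M → S) (i : Fin M)
    (N : ℕ) (s : ℕ → S) (a : ℕ → A) : Prop :=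
  IsTBPath E N s a ∧ (∃ j ≤ N, s j = σ i) ∧
    ∀ j ≤ N, ∀ i' : Fin M, i' < i → s j ≠ σ i'

/-- `p` is an irreducible error event at `σᵢ` (of some length `j ≥ 1`): it
satisfies the trellis constraint, starts and ends at `σᵢ`, and its interior
states avoid `σ_0, σ_1, …, σᵢ`. -/
def InIEE {S A : Type*} {M : ℕ} (E : Set (S × A × S)) (σ : Fin M → S) (i : Fin M)
    (p : NPath S A) : Prop :=
  1 ≤ p.len ∧
    (∀ l < p.len, (p.st l, p.out l, p.st (l + 1)) ∈ E) ∧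
    p.st 0 = σ i ∧ p.st p.len = σ i ∧
    ∀ j', 0 < j' → j' < p.len → ∀ i' : Fin M, i' ≤ i → p.st j' ≠ σ i'

/-- Invariant preserved by concatenation. -/
def Good {S A : Type*} {M : ℕ} (E : Set (S × A × S)) (σ : Fin M → S) (i : Fin M)
    (p : NPath S A) : Prop :=
  1 ≤ p.len ∧
    (∀ l < p.len, (p.st l, p.out l, p.st (l + 1)) ∈ E) ∧
    p.st 0 = σ i ∧ p.st p.len = σ i ∧
    ∀ j ≤ p.len, ∀ i' : Fin M, i' < i → p.st j ≠ σ i'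

lemma good_of_iee {S A : Type*} {M : ℕ} {E : Set (S × A × S)} {σ : Fin M → S}
    (hσ : Function.Injective σ) {i : Fin M} {p : NPath S A}
    (h : InIEE E σ i p) : Good E σ i p := by
  obtain ⟨h1, h2, h3, h4, h5⟩ := h
  refine ⟨h1, h2, h3, h4, ?_⟩
  intro j hj i' hi'
  rcases Nat.eq_zero_or_pos j with rfl | hj0
  · rw [h3]; intro h; exact absurd (hσ h) (Fin.ne_of_gt hi')
  rcases eq_or_lt_of_le hj with rfl | hjl
  · rw [h4]; intro h; exact absurd (hσ h) (Fin.ne_of_gt hi')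
  · exact h5 j hj0 hjl i' (le_of_lt hi')

lemma good_pconcat {S A : Type*} {M : ℕ} {E : Set (S × A × S)} {σ : Fin M → S}
    {i : Fin M} {p q : NPath S A}
    (hp : Good E σ i p) (hq : Good E σ i q) : Good E σ i (pconcat p q) := by
  obtain ⟨hp1, hp2, hp3, hp4, hp5⟩ := hp
  obtain ⟨hq1, hq2, hq3, hq4, hq5⟩ := hq
  have hst : ∀ j, (pconcat p q).st j = if j < p.len then p.st j else q.st (j - p.len) :=
    fun _ => rfl
  refine ⟨by simp [pconcat]; omega, ?_, ?_, ?_, ?_⟩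
  · intro l hl
    simp only [pconcat] at hl ⊢
    by_cases h1 : l + 1 < p.len
    · have h0 : l < p.len := by omega
      simp only [h0, h1, if_pos]
      exact hp2 l h0
    · by_cases h0 : l < p.len
      · -- l + 1 = p.len
        have he : l + 1 = p.len := by omega
        simp only [h0, if_pos, h1, if_neg, if_false]
        have : q.st (l + 1 - p.len) = p.st (l + 1) := by
          rw [he]; simp [hq3, ← hp4]
        rw [this]
        exact hp2 l h0
      · simp only [h0, if_neg, if_false]
        have h2 : ¬ (l + 1 < p.len) := by omega
        simp only [h2, if_neg, if_false]
        have he : l + 1 - p.len = (l - p.len) + 1 := by omega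
        rw [he]
        exact hq2 (l - p.len) (by omega)
  · rw [hst 0, if_pos (by omega)]; exact hp3
  · rw [hst, if_neg (by simp [pconcat])]
    have : (pconcat p q).len - p.len = q.len := by simp [pconcat]
    rw [this]; exact hq4
  · intro j hj i' hi'
    rw [hst]
    by_cases h0 : j < p.len
    · rw [if_pos h0]; exact hp5 j (by omega) i' hi'
    · rw [if_neg h0]
      exact hq5 (j - p.len) (by simp [pconcat] at hj; omega) i' hi'

lemma good_foldl {S A : Type*} {M : ℕ} {E : Set (S × A × S)} {σ : Fin M → S}
    {i : Fin M} :
    ∀ (l : List (NPath S A)) (p : NPath S A), Good E σ i p →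
      (∀ q ∈ l, Good E σ i q) →
      Good E σ i (l.foldl pconcat p) ∧
        (l.foldl pconcat p).len = p.len + (l.map NPath.len).sum := by
  intro l
  induction l with
  | nil => intro p hp _; exact ⟨hp, by simp⟩
  | cons q t ih =>
    intro p hp hall
    have h1 := ih (pconcat p q) (good_pconcat hp (hall q (by simp)))
      (fun r hr => hall r (by simp [hr]))
    simpa [pconcat, add_assoc] using h1

/-- Concatenation of irreducible error events yields tail-biting paths: given a
finite nonempty sequence of elements of `IEE(σᵢ)` whose lengths sum to `N`,
their concatenation is a tail-biting path of length `N` that starts and ends at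
`σᵢ` and belongs to `TBP(σᵢ)`. -/
theorem concat_of_iee_is_tbp {S A : Type*} {M : ℕ}
    (E : Set (S × A × S)) (σ : Fin M → S) (hσ : Function.Bijective σ)
    (i : Fin M) (N : ℕ)
    (p : NPath S A) (l : List (NPath S A))
    (hIEE : ∀ q ∈ p :: l, InIEE E σ i q)
    (hlen : p.len + (l.map NPath.len).sum = N) :
    IsTBPath E N (concatAll p l).st (concatAll p l).out ∧
    (concatAll p l).st 0 = σ i ∧ (concatAll p l).st N = σ i ∧
    InTBP E σ i N (concatAll p l).st (concatAll p l).out := by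
  have hg := good_foldl l p (good_of_iee hσ.injective (hIEE p (by simp)))
    (fun q hq => good_of_iee hσ.injective (hIEE q (by simp [hq])))
  obtain ⟨⟨h1, h2, h3, h4, h5⟩, hlen'⟩ := hg
  rw [hlen] at hlen'
  unfold concatAll
  rw [← hlen'] at *
  have htb : IsTBPath E (l.foldl pconcat p).len (l.foldl pconcat p).st
      (l.foldl pconcat p).out := ⟨h2, by rw [h3, h4]⟩
  exact ⟨htb, h3, h4, htb, ⟨0, by omega, h3⟩, h5⟩
end

section
/- Decomposition of anchored tail-biting paths: every path (s, a) of length N satisfying the trellis transition constraint with s_0 = s_N = σᵢ and with s_j ∉ {σ_0, …, σ_{i−1}} for all 0 ≤ j ≤ N equals the concatenation of a finite nonempty sequence of elements of IEE(σᵢ) whose lengths sum to N. -/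
/-- Two paths are equal as paths: same length, same states `0, …, len`, and
same outputs `0, …, len - 1`. -/
def PathEq {S A : Type*} (p q : NPath S A) : Prop :=
  p.len = q.len ∧ (∀ i ≤ p.len, p.st i = q.st i) ∧ ∀ i < p.len, p.out i = q.out i

lemma pconcat_assoc {S A : Type*} (p q r : NPath S A) :
    pconcat (pconcat p q) r = pconcat p (pconcat q r) := by
  unfold pconcat
  simp only [NPath.mk.injEq]
  refine ⟨(add_assoc _ _ _), funext fun i => ?_, funext fun i => ?_⟩ <;>
  · split_ifs <;> first | rfl | omega | (congr 1; omega)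

lemma foldl_pconcat {S A : Type*} (l : List (NPath S A)) (p q : NPath S A) :
    List.foldl pconcat (pconcat p q) l = pconcat p (List.foldl pconcat q l) := by
  induction l generalizing q with
  | nil => rfl
  | cons r l ih => simp [List.foldl, pconcat_assoc, ih]

lemma concatAll_cons {S A : Type*} (p q : NPath S A) (l : List (NPath S A)) :
    concatAll p (q :: l) = pconcat p (concatAll q l) := foldl_pconcat l p q

lemma pathEq_trans {S A : Type*} {p q r : NPath S A} (h1 : PathEq p q) (h2 : PathEq q r) :
    PathEq p r := by
  obtain ⟨hl1, hs1, ho1⟩ := h1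
  obtain ⟨hl2, hs2, ho2⟩ := h2
  exact ⟨hl1.trans hl2, fun i hi => (hs1 i hi).trans (hs2 i (by omega)),
    fun i hi => (ho1 i hi).trans (ho2 i (by omega))⟩

lemma pconcat_congr {S A : Type*} {r r' : NPath S A} (p : NPath S A) (h : PathEq r r') :
    PathEq (pconcat p r) (pconcat p r') := by
  obtain ⟨hl, hs, ho⟩ := h
  refine ⟨by simp [pconcat, hl], fun i hi => ?_, fun i hi => ?_⟩ <;>
  · simp only [pconcat]
    split_ifs with h1
    · rfl
    · first
      | exact hs _ (by simp [pconcat] at hi; omega)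
      | exact ho _ (by simp [pconcat] at hi; omega)

/-- Decomposition of anchored tail-biting paths: every path `(s, a)` of length
`N ≥ 1` satisfying the trellis transition constraint with `s_0 = s_N = σᵢ` and
with `s_j ∉ {σ_0, …, σ_{i−1}}` for all `0 ≤ j ≤ N` equals the concatenation of
a finite nonempty sequence of elements of `IEE(σᵢ)` whose lengths sum to `N`. -/
theorem anchored_path_decomposition {S A : Type*} {M : ℕ}
    (E : Set (S × A × S)) (σ : Fin M → S) (i : Fin M)
    (N : ℕ) (hN : 1 ≤ N) (s : ℕ → S) (a : ℕ → A)
    (hpath : IsTrellisPath E N s a) (h0 : s 0 = σ i) (hNend : s N = σ i)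
    (havoid : ∀ j ≤ N, ∀ i' : Fin M, i' < i → s j ≠ σ i') :
    ∃ (p : NPath S A) (l : List (NPath S A)),
      (∀ q ∈ p :: l, InIEE E σ i q) ∧
      p.len + (l.map NPath.len).sum = N ∧
      PathEq (concatAll p l) ⟨N, s, a⟩ := by
  classical
  induction N using Nat.strong_induction_on generalizing s a with
  | _ N IH =>
  have hex : ∃ t, 0 < t ∧ t ≤ N ∧ s t = σ i := ⟨N, hN, le_refl N, hNend⟩
  have hspec := Nat.find_spec hex
  have hjmin' : ∀ t, t < Nat.find hex → ¬(0 < t ∧ t ≤ N ∧ s t = σ i) :=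
    fun t ht => Nat.find_min hex ht
  set j := Nat.find hex with hjdef
  clear_value j
  obtain ⟨hj0, hjN, hjend⟩ := hspec
  have hjmin : ∀ t, 0 < t → t < j → s t ≠ σ i := by
    intro t ht htj hst
    exact hjmin' t htj ⟨ht, by omega, hst⟩
  have hIEE1 : InIEE E σ i ⟨j, s, a⟩ := by
    refine ⟨hj0, fun l hl => hpath l (lt_of_lt_of_le hl hjN), h0, hjend, ?_⟩
    intro j' hj'0 hj'j i' hi'
    have hj'j : j' < j := hj'j
    rcases lt_or_eq_of_le hi' with h | h
    · exact havoid j' (by omega) i' h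
    · rw [h]; exact hjmin j' hj'0 hj'j
  rcases eq_or_lt_of_le hjN with hje | hje
  · refine ⟨⟨j, s, a⟩, [], ?_, by simpa using hje, ?_⟩
    · intro q hq
      simp only [List.mem_singleton] at hq
      subst hq; exact hIEE1
    · subst hje
      exact ⟨rfl, fun _ _ => rfl, fun _ _ => rfl⟩
  · obtain ⟨p, l, hmem, hsum, heq⟩ :=
      IH (N - j) (by omega) (by omega) (fun k => s (j + k)) (fun k => a (j + k))
        (fun t ht => by
          have := hpath (j + t) (by omega)
          simpa [Nat.add_assoc] using this)
        (by simpa using hjend)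
        (by show s (j + (N - j)) = σ i
            rw [show j + (N - j) = N by omega]; exact hNend)
        (fun t ht i' hi' => havoid (j + t) (by omega) i' hi')
    refine ⟨⟨j, s, a⟩, p :: l, ?_, ?_, ?_⟩
    · intro q hq
      simp only [List.mem_cons] at hq
      rcases hq with rfl | hq
      · exact hIEE1
      · exact hmem q (by simpa using hq)
    · simp only [List.map_cons, List.sum_cons]
      omega
    · rw [concatAll_cons]
      refine pathEq_trans (pconcat_congr _ heq) ?_
      refine ⟨by simp [pconcat]; omega, fun t ht => ?_, fun t ht => ?_⟩
      all_goals
        simp only [pconcat]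
        split_ifs with h1
        · rfl
        · congr 1; omega
end

section
/- Weight-preserving reconstruction: if the output alphabet is A = (Fin 2)^n and (s, a) ∈ TBP(σᵢ) is a tail-biting path of length N whose output Hamming weight is d, then there exist 0 ≤ k < N and a finite sequence of elements of IEE(σᵢ), with lengths summing to N and output Hamming weights summing to d, whose concatenation equals the cyclic shift of (s, a) by k. -/
/-- Cyclic shift by `k` of the state sequence: `s'_i = s_{(i+k) mod N}`. -/
def cycShiftS {S : Type*} (N k : ℕ) (s : ℕ → S) : ℕ → S :=
  fun i => s ((i + k) % N)

/-- Cyclic shift by `k` of the output sequence: `a'_i = a_{(i+k) mod N}`. -/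
def cycShiftA {A : Type*} (N k : ℕ) (a : ℕ → A) : ℕ → A :=
  fun i => a ((i + k) % N)

/-- The output Hamming weight of the first `L` outputs: the total number of
nonzero bits among `a_0, …, a_{L−1} ∈ (Fin 2)^n`. -/
def outWeight (n L : ℕ) (a : ℕ → (Fin n → Fin 2)) : ℕ :=
  ∑ i ∈ Finset.range L, (Finset.univ.filter fun t : Fin n => a i t ≠ 0).card

/-! Shift the tail-biting path cyclically so that it starts, and hence ends, at a visit of `σ i`.
Since it avoids `σ_0, …, σ_{i-1}`, cutting it at its visits of `σ i` splits it into irreducible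
error events. Length and Hamming weight add up under concatenation, and the weight is invariant
under cyclic shifts. -/

open Finset

section Paths

variable {S A : Type*}

theorem concatAll_len (p : NPath S A) (l : List (NPath S A)) :
    (concatAll p l).len = p.len + (l.map NPath.len).sum := by
  induction l generalizing p with
  | nil => simp [concatAll]
  | cons q l ih =>
    rw [List.map_cons, List.sum_cons, ← add_assoc]
    exact ih (pconcat p q)

theorem concatAll_append_singleton (p : NPath S A) (l : List (NPath S A)) (q : NPath S A) :
    concatAll p (l ++ [q]) = pconcat (concatAll p l) q := by
  simp [concatAll]

def NPath.segment (s : ℕ → S) (a : ℕ → A) (t u : ℕ) : NPath S A :=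
  ⟨u - t, fun j => s (j + t), fun j => a (j + t)⟩

theorem NPath.pathEq_segment_zero (s : ℕ → S) (a : ℕ → A) (L : ℕ) :
    PathEq (NPath.segment s a 0 L) ⟨L, s, a⟩ :=
  ⟨Nat.sub_zero L, fun _ _ => rfl, fun _ _ => rfl⟩

theorem PathEq.pconcat_segment {C : NPath S A} {s : ℕ → S} {a : ℕ → A} {t L : ℕ}
    (hC : PathEq C ⟨t, s, a⟩) (htL : t ≤ L) :
    PathEq (pconcat C (NPath.segment s a t L)) ⟨L, s, a⟩ := by
  obtain ⟨hlen, hst, hout⟩ := hC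
  simp only at hlen hst hout
  refine ⟨by simp [pconcat, NPath.segment]; omega, fun j _ => ?_, fun j _ => ?_⟩ <;>
  simp only [pconcat, NPath.segment] <;> split_ifs with hj
  · exact hst j (by omega)
  · rw [hlen, Nat.sub_add_cancel (by omega)]
  · exact hout j hj
  · rw [hlen, Nat.sub_add_cancel (by omega)]

theorem IsTrellisPath.mono {E : Set (S × A × S)} {L t : ℕ} {s : ℕ → S} {a : ℕ → A}
    (h : IsTrellisPath E L s a) (htL : t ≤ L) : IsTrellisPath E t s a :=
  fun j hj => h j (hj.trans_le htL)

end Paths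

section Decomposition

variable {S A : Type*} {M : ℕ} {E : Set (S × A × S)} {σ : Fin M → S} {i : Fin M}
  {s : ℕ → S} {a : ℕ → A}

theorem inIEE_segment {t L : ℕ} (htL : t < L) (htr : IsTrellisPath E L s a)
    (ht : s t = σ i) (hL : s L = σ i) (havoid : ∀ j ≤ L, ∀ i' < i, s j ≠ σ i')
    (hlast : ∀ j, t < j → j < L → s j ≠ σ i) :
    InIEE E σ i (NPath.segment s a t L) := by
  refine ⟨by simp [NPath.segment]; omega, fun l hl => ?_, by simpa [NPath.segment] using ht,
    by simpa [NPath.segment, Nat.sub_add_cancel htL.le] using hL, fun j hj0 hjL i' hi' => ?_⟩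
  · simp only [NPath.segment] at hl ⊢
    simpa [Nat.add_right_comm] using htr (l + t) (by omega)
  · simp only [NPath.segment] at hjL ⊢
    rcases hi'.lt_or_eq with hi' | rfl
    · exact havoid _ (by omega) i' hi'
    · exact hlast _ (by omega) (by omega)

theorem IsTrellisPath.exists_iee_decomposition {L : ℕ} (hL : 1 ≤ L)
    (htr : IsTrellisPath E L s a) (h0 : s 0 = σ i) (hLσ : s L = σ i)
    (havoid : ∀ j ≤ L, ∀ i' < i, s j ≠ σ i') :
    ∃ (p : NPath S A) (l : List (NPath S A)),
      (∀ q ∈ p :: l, InIEE E σ i q) ∧ PathEq (concatAll p l) ⟨L, s, a⟩ := by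
  classical
  -- Split off the segment after the last visit of `σ i`: `concatAll` is a left fold.
  induction L using Nat.strong_induction_on with
  | _ L ih =>
  set t := Nat.findGreatest (fun t => s t = σ i) (L - 1)
  have htL : t < L := (Nat.findGreatest_le _).trans_lt (by omega)
  have ht : s t = σ i := Nat.findGreatest_spec (P := fun t => s t = σ i) (Nat.zero_le _) h0
  have hlast : ∀ j, t < j → j < L → s j ≠ σ i := fun j htj hjL =>
    Nat.findGreatest_is_greatest htj (by omega)
  have hq := inIEE_segment htL htr ht hLσ havoid hlast
  rcases Nat.eq_zero_or_pos t with ht0 | ht0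
  · refine ⟨NPath.segment s a t L, [], by simpa using hq, ?_⟩
    rw [ht0]
    exact NPath.pathEq_segment_zero s a L
  · obtain ⟨p, l, hIEE, hpl⟩ := ih t htL ht0 (htr.mono htL.le) ht
      fun j hj => havoid j (by omega)
    refine ⟨p, l ++ [NPath.segment s a t L], ?_, ?_⟩
    · rw [← List.cons_append, List.forall_mem_append]
      exact ⟨hIEE, by simpa using hq⟩
    · rw [concatAll_append_singleton]
      exact hpl.pconcat_segment htL.le

end Decomposition

section CyclicShift

variable {S A : Type*} {N : ℕ} {s : ℕ → S}

theorem sum_range_add_mod {β : Type*} [AddCommMonoid β] (f : ℕ → β) (N k : ℕ) :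
    ∑ i ∈ range N, f ((i + k) % N) = ∑ i ∈ range N, f i := by
  rcases N.eq_zero_or_pos with rfl | hN
  · simp
  have : NeZero N := ⟨hN.ne'⟩
  rw [← Fin.sum_univ_eq_sum_range, ← Fin.sum_univ_eq_sum_range]
  exact Fintype.sum_equiv (Equiv.addRight (Fin.ofNat N k)) _ _ fun x => by
    simp [Fin.val_add, Nat.add_mod_mod]

theorem mod_add_one_of_periodic (h : s 0 = s N) (m : ℕ) :
    s ((m + 1) % N) = s (m % N + 1) := by
  rcases N.eq_zero_or_pos with rfl | hN
  · simp
  rw [← Nat.mod_add_mod]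
  obtain hlt | heq : m % N + 1 < N ∨ m % N + 1 = N := by
    have := Nat.mod_lt m hN
    omega
  · rw [Nat.mod_eq_of_lt hlt]
  · rw [heq, Nat.mod_self, h]

theorem IsTBPath.cycShift {E : Set (S × A × S)} {a : ℕ → A} (h : IsTBPath E N s a) (k : ℕ) :
    IsTBPath E N (cycShiftS N k s) (cycShiftA N k a) := by
  refine ⟨fun m hm => ?_, by simp [cycShiftS]⟩
  simp only [cycShiftS, cycShiftA, Nat.add_right_comm m 1 k]
  rw [mod_add_one_of_periodic h.2]
  rcases N.eq_zero_or_pos with rfl | hN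
  · omega
  · exact h.1 _ (Nat.mod_lt _ hN)

end CyclicShift

section Weight

variable {S : Type*} {n : ℕ}

theorem outWeight_congr {L : ℕ} {a b : ℕ → (Fin n → Fin 2)} (h : ∀ j < L, a j = b j) :
    outWeight n L a = outWeight n L b :=
  sum_congr rfl fun j hj => by rw [h j (mem_range.mp hj)]

theorem outWeight_cycShiftA (N k : ℕ) (a : ℕ → (Fin n → Fin 2)) :
    outWeight n N (cycShiftA N k a) = outWeight n N a :=
  sum_range_add_mod (fun j => #{t | a j t ≠ 0}) N k

theorem outWeight_pconcat (p q : NPath S (Fin n → Fin 2)) :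
    outWeight n (pconcat p q).len (pconcat p q).out =
      outWeight n p.len p.out + outWeight n q.len q.out := by
  simp only [outWeight, pconcat, sum_range_add]
  congr 1 <;> refine sum_congr rfl fun j hj => ?_ <;> simp at hj
  · simp [hj]
  · simp

theorem outWeight_concatAll (p : NPath S (Fin n → Fin 2)) (l : List (NPath S (Fin n → Fin 2))) :
    outWeight n (concatAll p l).len (concatAll p l).out =
      outWeight n p.len p.out + (l.map fun q => outWeight n q.len q.out).sum := by
  induction l generalizing p with
  | nil => simp [concatAll]
  | cons q l ih =>
    rw [List.map_cons, List.sum_cons, ← add_assoc, ← outWeight_pconcat]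
    exact ih (pconcat p q)

theorem PathEq.outWeight_eq {p q : NPath S (Fin n → Fin 2)} (h : PathEq p q) :
    outWeight n p.len p.out = outWeight n q.len q.out := by
  rw [← h.1]
  exact outWeight_congr h.2.2

end Weight

/-- Weight-preserving reconstruction: if the output alphabet is `(Fin 2)^n` and
`(s, a) ∈ TBP(σᵢ)` is a tail-biting path of length `N` whose output Hamming
weight is `d`, then there exist `0 ≤ k < N` and a finite nonempty sequence of
elements of `IEE(σᵢ)`, with lengths summing to `N` and output Hamming weights
summing to `d`, whose concatenation equals the cyclic shift of `(s, a)` by `k`. -/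
theorem weight_preserving_reconstruction {S : Type*} {M n : ℕ}
    (E : Set (S × (Fin n → Fin 2) × S)) (σ : Fin M → S) (i : Fin M)
    (N d : ℕ) (hN : 1 ≤ N) (s : ℕ → S) (a : ℕ → (Fin n → Fin 2))
    (h : InTBP E σ i N s a) (hd : outWeight n N a = d) :
    ∃ k < N, ∃ (p : NPath S (Fin n → Fin 2)) (l : List (NPath S (Fin n → Fin 2))),
      (∀ q ∈ p :: l, InIEE E σ i q) ∧
      p.len + (l.map NPath.len).sum = N ∧
      outWeight n p.len p.out + (l.map fun q => outWeight n q.len q.out).sum = d ∧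
      PathEq (concatAll p l) ⟨N, cycShiftS N k s, cycShiftA N k a⟩ := by
  obtain ⟨htb, ⟨j, hjN, hj⟩, havoid⟩ := h
  obtain ⟨k, hkN, hk⟩ : ∃ k < N, s k = σ i := by
    rcases hjN.lt_or_eq with hjN | rfl
    · exact ⟨j, hjN, hj⟩
    · exact ⟨0, hN, htb.2.trans hj⟩
  have hshift := htb.cycShift k
  have h0 : cycShiftS N k s 0 = σ i := by simpa [cycShiftS, Nat.mod_eq_of_lt hkN] using hk
  obtain ⟨p, l, hIEE, hpl⟩ := hshift.1.exists_iee_decomposition hN h0 (hshift.2 ▸ h0)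
    fun j' _ i' hi' => havoid _ (Nat.mod_lt _ hN).le i' hi'
  refine ⟨k, hkN, p, l, hIEE, ?_, ?_, hpl⟩
  · rw [← concatAll_len, hpl.1]
  · rw [← outWeight_concatAll, hpl.outWeight_eq, outWeight_cycShiftA, hd]
end
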